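/- Let K be a commutative ring with unity, A a finite alphabet, w a word over A and r a positive integer with r ≤ |w|. Then λ(w) = Σ λ(u) · (−1)^{|s|} (s̃ ⧢ t), where the sum ranges over all factorizations w = s u t with |u| = r (each occurrence counted separately), λ(u)·(s̃ ⧢ t) denotes the concatenation product in K⟨A⟩, and s̃ is the reversal of s. -/

import Mathlib

open scoped BigOperators
open Classical

noncomputable section

/-- The free associative algebra `K⟨A⟩` on the alphabet `A`, realized as the monoid algebra
of the free monoid on `A`. -/
abbrev NC (K A : Type*) [CommRing K] : Type _ := MonoidAlgebra K (FreeMonoid A)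

variable (K A : Type*) [CommRing K]

/-- The monomial (word) `w` viewed as an element of `K⟨A⟩`. -/
def wp (w : List A) : NC K A := MonoidAlgebra.single (FreeMonoid.ofList w) 1

/-- The coefficient `(P, w)` of the word `w` in the polynomial `P`. -/
def coeffW (P : NC K A) (w : List A) : K := P.coeff (FreeMonoid.ofList w)

/-- The canonical scalar product `(P, Q) = ∑_w (P, w)(Q, w)` on `K⟨A⟩`. -/
def sp (P Q : NC K A) : K := Finsupp.sum P.coeff fun w c => c * Q.coeff w

attribute [local instance] LieRing.ofAssociativeRing

/-- The free Lie algebra `L_K(A)`: the Lie subalgebra of `K⟨A⟩` (with the commutator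
bracket) generated by the letters. -/
def freeLie : LieSubalgebra K (NC K A) :=
  LieSubalgebra.lieSpan K (NC K A) (Set.range fun a : A => wp K A [a])

/-- The adjoint `λ` of the left-normed Lie bracketing, on words:
`λ(ε) = 0`, `λ(a) = a`, `λ(aub) = λ(au)b − λ(ub)a`. -/
def lam : List A → NC K A
  | [] => 0
  | [a] => wp K A [a]
  | a :: b :: t =>
      lam (a :: (b :: t).dropLast) * wp K A [(b :: t).getLast (by simp)] -
        lam (b :: t) * wp K A [a]
  termination_by w => w.length
  decreasing_by
    all_goals simp [List.length_dropLast]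

/-- `λ` extended linearly to the whole of `K⟨A⟩`. -/
def lamLin : NC K A →ₗ[K] NC K A :=
  (Finsupp.linearCombination K fun w : FreeMonoid A => lam K A (FreeMonoid.toList w)) ∘ₗ
    (MonoidAlgebra.coeffLinearEquiv K).toLinearMap

/-- The shuffle product of two words, as an element of `K⟨A⟩`. -/
def shuffleW : List A → List A → NC K A
  | [], v => wp K A v
  | u, [] => wp K A u
  | a :: u, b :: v =>
      wp K A [a] * shuffleW u (b :: v) + wp K A [b] * shuffleW (a :: u) v
  termination_by u v => u.length + v.length
  decreasing_by
    all_goals simp [Nat.lt_succ_iff]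

/-- The shuffle product on `K⟨A⟩`, extended bilinearly. -/
def sh (P Q : NC K A) : NC K A :=
  Finsupp.sum P.coeff fun u cu =>
    Finsupp.sum Q.coeff fun v cv =>
      (cu * cv) • shuffleW K A (FreeMonoid.toList u) (FreeMonoid.toList v)

/-- The right residual `P ▷ q` of `P` by a word `q`: `(P ▷ q, w) = (P, qw)`. -/
def rresW (P : NC K A) (q : List A) : NC K A :=
  Finsupp.sum P.coeff fun u c =>
    if q <+: FreeMonoid.toList u then c • wp K A ((FreeMonoid.toList u).drop q.length) else 0

/-- The right residual `P ▷ Q`: `(P ▷ Q, w) = (P, Qw)`. -/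
def rres (P Q : NC K A) : NC K A :=
  Finsupp.sum Q.coeff fun v c => c • rresW K A P (FreeMonoid.toList v)

/-- Auxiliary left residual by a word `q`: `(q ◁ P, w) = (P, wq)`. -/
def lresW (P : NC K A) (q : List A) : NC K A :=
  Finsupp.sum P.coeff fun u c =>
    if q <:+ FreeMonoid.toList u then
      c • wp K A ((FreeMonoid.toList u).take ((FreeMonoid.toList u).length - q.length))
    else 0

/-- The left residual `Q ◁ P`: `(Q ◁ P, w) = (P, wQ)`. -/
def lres (Q P : NC K A) : NC K A :=
  Finsupp.sum Q.coeff fun v c => c • lresW K A P (FreeMonoid.toList v)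

/-- The number of trailing occurrences of the letter `a` in the word `v`. -/
def trailCount (a : A) (v : FreeMonoid A) : ℕ :=
  ((FreeMonoid.toList v).reverse.takeWhile fun x => decide (x = a)).length

/-- `d(P)`: the least number of trailing `a`'s among the words in the support of `P`. -/
def dP (a : A) (P : NC K A) : ℕ :=
  sInf {n : ℕ | ∃ v ∈ Finsupp.support P.coeff, trailCount A a v = n}

/-- `e(P)`: the largest number of trailing `a`'s among the words in the support of `P`. -/
def eP (a : A) (P : NC K A) : ℕ :=
  Finset.sup (Finsupp.support P.coeff) (trailCount A a)

/-- The polynomial `P_i` in the decomposition `P = ∑ P_i b a^i`: it collects (and strips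
the suffix `b a^i` from) the monomials of `P` with exactly `i` trailing `a`'s. -/
def partBA (a b : A) (i : ℕ) (P : NC K A) : NC K A :=
  Finsupp.sum P.coeff fun v c =>
    if (FreeMonoid.toList v).reverse.take (i + 1) = List.replicate i a ++ [b] then
      c • wp K A ((FreeMonoid.toList v).take ((FreeMonoid.toList v).length - (i + 1)))
    else 0

/-- A word is Lyndon if it is nonempty and strictly smaller, in the lexicographic order,
than each of its proper nonempty right factors. -/
def IsLyndon {A : Type*} [LinearOrder A] (w : List A) : Prop :=
  w ≠ [] ∧ ∀ s t : List A, w = t ++ s → t ≠ [] → s ≠ [] → List.Lex (· < ·) w s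

/-- `γ(w)`: the nonnegative generator of the ideal `{(P, w) : P ∈ L_ℤ(A)}` of `ℤ`. -/
def gammaW (A : Type*) (w : List A) : ℤ :=
  haveI : (Ideal.span {c : ℤ | ∃ P ∈ freeLie ℤ A, coeffW ℤ A P w = c}).IsPrincipal :=
    IsPrincipalIdealRing.principal _
  (Submodule.IsPrincipal.generator
    (Ideal.span {c : ℤ | ∃ P ∈ freeLie ℤ A, coeffW ℤ A P w = c})).natAbs

end

/-!
Both `λ` and the right-hand side `E_r = factorSum r` satisfy
`F(a x b) = F(a x) b − F(x b) a` for letters `a, b` and `|x| + 1 ≥ r`, and they agree on words of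
length `r`. For `E_r` this comes from the shuffle recursion at the right end,
`(p a) ⧢ (q b) = (p ⧢ q b) a + (p a ⧢ q) b`, applied to `s̃ ⧢ t` where `a` is the first letter of
`s` and `b` the last letter of `t`: the summand of `a x b` at a factorization `s u t` splits into
the summand of `a x` obtained by deleting `b` from `t`, and minus that of `x b` obtained by
deleting `a` from `s`.
-/

noncomputable section FactorExpansion

variable (K A : Type*) [CommRing K]

def factorTerm (s u t : List A) : NC K A :=
  lam K A u * ((-1 : K) ^ s.length • shuffleW K A s.reverse t)

def factorTermAt (r : ℕ) (w : List A) (i : ℕ) : NC K A :=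
  factorTerm K A (w.take i) ((w.drop i).take r) (w.drop (i + r))

def factorSum (r : ℕ) (w : List A) : NC K A :=
  ∑ i ∈ Finset.range (w.length - r + 1), factorTermAt K A r w i

variable {K A}

theorem wp_append (u v : List A) : wp K A (u ++ v) = wp K A u * wp K A v := by
  simp [wp, MonoidAlgebra.single_mul_single]

theorem wp_cons (x : A) (l : List A) : wp K A (x :: l) = wp K A [x] * wp K A l :=
  wp_append [x] l

theorem wp_nil : wp K A ([] : List A) = 1 := rfl

theorem shuffleW_nil_left (v : List A) : shuffleW K A [] v = wp K A v := by
  cases v <;> rw [shuffleW]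

theorem shuffleW_nil_right (u : List A) : shuffleW K A u [] = wp K A u := by
  cases u <;> simp [shuffleW]

theorem shuffleW_cons_cons (a b : A) (u v : List A) :
    shuffleW K A (a :: u) (b :: v) =
      wp K A [a] * shuffleW K A u (b :: v) + wp K A [b] * shuffleW K A (a :: u) v := by
  rw [shuffleW]

theorem shuffleW_append_singleton (a b : A) :
    ∀ p q : List A, shuffleW K A (p ++ [a]) (q ++ [b]) =
      shuffleW K A p (q ++ [b]) * wp K A [a] + shuffleW K A (p ++ [a]) q * wp K A [b]
  | [], [] => by
    simp only [List.nil_append, shuffleW_cons_cons, shuffleW_nil_left, shuffleW_nil_right,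
      ← wp_append, List.singleton_append, add_comm]
  | [], d :: q => by
    have ih := shuffleW_append_singleton a b [] q
    simp only [List.nil_append, List.cons_append, shuffleW_cons_cons] at ih ⊢
    rw [ih]
    simp only [shuffleW_nil_left]
    rw [wp_cons d (q ++ [b]), wp_cons d q, wp_append q]
    noncomm_ring
  | c :: p, [] => by
    have ih := shuffleW_append_singleton a b p []
    simp only [List.nil_append, List.cons_append, shuffleW_cons_cons] at ih ⊢
    rw [ih]
    simp only [shuffleW_nil_right]
    rw [wp_cons c (p ++ [a]), wp_cons c p, wp_append p]
    noncomm_ring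
  | c :: p, d :: q => by
    have ih₁ := shuffleW_append_singleton a b p (d :: q)
    have ih₂ := shuffleW_append_singleton a b (c :: p) q
    simp only [List.cons_append, shuffleW_cons_cons] at ih₁ ih₂ ⊢
    rw [ih₁, ih₂]
    noncomm_ring
termination_by p q => p.length + q.length

theorem lam_cons_append_singleton (a b : A) (x : List A) :
    lam K A (a :: (x ++ [b])) =
      lam K A (a :: x) * wp K A [b] - lam K A (x ++ [b]) * wp K A [a] := by
  cases x with
  | nil => rw [lam]; simp [List.dropLast, lam]
  | cons c x =>
    rw [List.cons_append, lam]
    simp only [← List.cons_append, List.dropLast_concat, List.getLast_concat]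

theorem factorTerm_nil_append_singleton (u t : List A) (b : A) :
    factorTerm K A [] u (t ++ [b]) = factorTerm K A [] u t * wp K A [b] := by
  simp only [factorTerm, List.reverse_nil, shuffleW_nil_left, wp_append, List.length_nil, pow_zero,
    one_smul, mul_assoc]

theorem factorTerm_cons_nil (a : A) (s u : List A) :
    factorTerm K A (a :: s) u [] = -(factorTerm K A s u [] * wp K A [a]) := by
  rw [factorTerm, factorTerm, List.length_cons, pow_succ, mul_neg_one, neg_smul, List.reverse_cons]
  simp only [shuffleW_nil_right, wp_append, mul_neg, smul_mul_assoc, mul_assoc]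

theorem factorTerm_cons_append_singleton (a b : A) (s u t : List A) :
    factorTerm K A (a :: s) u (t ++ [b]) =
      factorTerm K A (a :: s) u t * wp K A [b] - factorTerm K A s u (t ++ [b]) * wp K A [a] := by
  rw [factorTerm, factorTerm, factorTerm, List.length_cons, pow_succ, mul_neg_one, neg_smul,
    neg_smul, List.reverse_cons, shuffleW_append_singleton]
  simp only [smul_add, mul_add, mul_neg, neg_mul, smul_mul_assoc, mul_assoc]
  abel

theorem factorTermAt_cons_succ (r : ℕ) (a : A) (w : List A) (i : ℕ) :
    factorTermAt K A r (a :: w) (i + 1) =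
      factorTerm K A (a :: w.take i) ((w.drop i).take r) (w.drop (i + r)) := by
  rw [factorTermAt, Nat.add_right_comm]
  rfl

theorem factorTermAt_append_singleton {r i : ℕ} (b : A) (v : List A) (h : i + r ≤ v.length) :
    factorTermAt K A r (v ++ [b]) i =
      factorTerm K A (v.take i) ((v.drop i).take r) (v.drop (i + r) ++ [b]) := by
  rw [factorTermAt, List.take_append_of_le_length (by omega),
    List.drop_append_of_le_length (by omega), List.take_append_of_le_length (by simp; omega),
    List.drop_append_of_le_length h]

theorem factorSum_of_length_eq {r : ℕ} {w : List A} (h : w.length = r) :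
    factorSum K A r w = lam K A w := by
  rw [factorSum, h, Nat.sub_self, Finset.sum_range_one, factorTermAt, zero_add, List.drop_zero,
    List.take_zero, List.take_of_length_le h.le, List.drop_of_length_le h.le, factorTerm,
    List.reverse_nil, shuffleW_nil_left, wp_nil, List.length_nil, pow_zero, one_smul, mul_one]

theorem factorSum_cons_append_singleton {r : ℕ} (a b : A) (x : List A) (h : r ≤ x.length + 1) :
    factorSum K A r (a :: (x ++ [b])) =
      factorSum K A r (a :: x) * wp K A [b] - factorSum K A r (x ++ [b]) * wp K A [a] := by
  obtain ⟨n, hn⟩ : ∃ n, x.length + 1 = n + r := ⟨x.length + 1 - r, by omega⟩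
  have hfirst :
      factorTermAt K A r (a :: (x ++ [b])) 0 = factorTermAt K A r (a :: x) 0 * wp K A [b] := by
    rw [show a :: (x ++ [b]) = (a :: x) ++ [b] from rfl,
      factorTermAt_append_singleton _ _ (by simp; omega), List.take_zero,
      factorTerm_nil_append_singleton]
    rfl
  have hmiddle : ∀ i ∈ Finset.range n, factorTermAt K A r (a :: (x ++ [b])) (i + 1) =
      factorTermAt K A r (a :: x) (i + 1) * wp K A [b] -
        factorTermAt K A r (x ++ [b]) i * wp K A [a] := by
    intro i hi
    rw [Finset.mem_range] at hi
    rw [factorTermAt_cons_succ, factorTermAt_cons_succ,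
      factorTermAt_append_singleton _ _ (by omega),
      List.take_append_of_le_length (by omega), List.drop_append_of_le_length (by omega),
      List.take_append_of_le_length (by simp; omega), List.drop_append_of_le_length (by omega),
      factorTerm_cons_append_singleton]
  have hlast : factorTermAt K A r (a :: (x ++ [b])) (n + 1) =
      -(factorTermAt K A r (x ++ [b]) n * wp K A [a]) := by
    have hend : (x ++ [b]).drop (n + r) = [] := List.drop_of_length_le (by simp; omega)
    rw [factorTermAt_cons_succ, hend, factorTerm_cons_nil, factorTermAt, hend]
  have hlen₁ : (a :: (x ++ [b])).length - r + 1 = n + 1 + 1 := by simp; omega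
  have hlen₂ : (a :: x).length - r + 1 = n + 1 := by simp; omega
  have hlen₃ : (x ++ [b]).length - r + 1 = n + 1 := by simp; omega
  rw [factorSum, factorSum, factorSum, hlen₁, hlen₂, hlen₃, Finset.sum_range_succ',
    Finset.sum_range_succ, Finset.sum_range_succ' (factorTermAt K A r (a :: x)),
    Finset.sum_range_succ (factorTermAt K A r (x ++ [b])), Finset.sum_congr rfl hmiddle, hfirst,
    hlast, Finset.sum_sub_distrib, ← Finset.sum_mul, ← Finset.sum_mul]
  noncomm_ring

theorem lam_eq_factorSum {r : ℕ} (hr : 1 ≤ r) (w : List A) (hw : r ≤ w.length) :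
    lam K A w = factorSum K A r w := by
  rcases hw.eq_or_lt with heq | hlt
  · exact (factorSum_of_length_eq heq.symm).symm
  · obtain ⟨a, v, rfl⟩ :=
      List.exists_cons_of_ne_nil (List.ne_nil_of_length_pos (l := w) (by omega))
    obtain ⟨x, b, rfl⟩ :=
      (List.eq_nil_or_concat' v).resolve_left (by rintro rfl; simp at hlt; omega)
    simp only [List.length_cons, List.length_append, List.length_nil] at hlt
    rw [lam_cons_append_singleton, factorSum_cons_append_singleton _ _ _ (by omega),
      lam_eq_factorSum hr (a :: x) (by simp; omega),
      lam_eq_factorSum hr (x ++ [b]) (by simp; omega)]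
termination_by w.length

end FactorExpansion

theorem lam_eq_sum_over_factors_of_length_general
    (K A : Type*) [CommRing K] (w : List A) (r : ℕ) (hr : 1 ≤ r) (hrw : r ≤ w.length) :
    lam K A w =
      ∑ i ∈ Finset.range (w.length - r + 1),
        lam K A ((w.drop i).take r) *
          ((-1 : K) ^ i • shuffleW K A (w.take i).reverse (w.drop (i + r))) := by
  rw [lam_eq_factorSum hr w hrw, factorSum]
  refine Finset.sum_congr rfl fun i hi => ?_
  have hi : i ≤ w.length := by rw [Finset.mem_range] at hi; omega
  rw [factorTermAt, factorTerm, List.length_take_of_le hi]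

theorem lam_eq_sum_over_factors_of_length
    (K A : Type*) [CommRing K] [Fintype A] (w : List A) (r : ℕ) (hr : 1 ≤ r) (hrw : r ≤ w.length) :
    lam K A w =
      ∑ i ∈ Finset.range (w.length - r + 1),
        lam K A ((w.drop i).take r) *
          ((-1 : K) ^ i • shuffleW K A (w.take i).reverse (w.drop (i + r))) :=
  lam_eq_sum_over_factors_of_length_general K A w r hr hrw
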